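/- arXiv:2111.10904 — 2 statements merged into one kernel-verified Lean document; each statement's English description precedes it below -/
import Mathlib

section
/- Margin-based misclassification bound (case γ > 0): let φ, φ̂ be real-valued random variables (functions of X and auxiliary randomness) such that P(0 < |φ| ≤ t) ≤ C·t^γ for all t > 0, with constants C > 0 and γ > 0. Then E[ |φ| · 𝟙{ sign(φ̂) ≠ sign(φ), φ ≠ 0 } ] ≤ E[ |φ| · 𝟙{ |φ̂ − φ| ≥ |φ|, φ ≠ 0 } ] ≤ (γ+2)·(2/γ)^{γ/(γ+2)} · C^{1/(γ+2)} · ( E[(φ̂ − φ)²] )^{(γ+1)/(γ+2)}. -/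
open MeasureTheory

/-!
If the predicted sign is wrong at a point where `φ ≠ 0`, then the error `Δ = φ̂ - φ` satisfies
`|Δ| ≥ |φ|`. Split the event `{|φ| ≤ |Δ|, φ ≠ 0}` at a threshold `t > 0`: where `|φ| ≤ t` the
integrand is at most `t`, and the margin condition bounds the probability of that part by
`C t^γ`; where `|φ| > t` we have `|φ| ≤ |Δ| ≤ Δ² / t`. Hence the integral is at most
`C t^(γ+1) + E[Δ²] / t`, and the choice `t^(γ+2) = E[Δ²] / C` gives
`2 C^(1/(γ+2)) E[Δ²]^((γ+1)/(γ+2))`, which is below the stated bound since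
`2 ≤ (γ+2) (2/γ)^(γ/(γ+2))`.
-/

lemma abs_le_abs_sub_of_sign_ne {x y : ℝ}
    (h : (if 0 ≤ y then (1:ℝ) else -1) ≠ (if 0 ≤ x then 1 else -1)) : |x| ≤ |y - x| := by
  split_ifs at h with hy hx hx
  · exact absurd rfl h
  · rw [abs_of_neg (not_le.1 hx), abs_of_nonneg (by linarith)]; linarith
  · rw [abs_of_nonneg hx, abs_of_neg (by linarith)]; linarith
  · exact absurd rfl h

lemma abs_mul_ite_sign_ne_le (x y : ℝ) :
    |x| * (if (if 0 ≤ y then (1:ℝ) else -1) ≠ (if 0 ≤ x then 1 else -1) ∧ x ≠ 0 then (1:ℝ) else 0)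
      ≤ |x| * (if |x| ≤ |y - x| ∧ x ≠ 0 then (1:ℝ) else 0) := by
  by_cases h : (if 0 ≤ y then (1:ℝ) else -1) ≠ (if 0 ≤ x then 1 else -1) ∧ x ≠ 0
  · rw [if_pos h, if_pos ⟨abs_le_abs_sub_of_sign_ne h.1, h.2⟩]
  · rw [if_neg h, mul_zero]; positivity

lemma abs_mul_ite_le_indicator_add {Ω : Type*} {φ ψ : Ω → ℝ} (ω : Ω) {t : ℝ} (ht : 0 < t) :
    |φ ω| * (if |φ ω| ≤ |ψ ω| ∧ φ ω ≠ 0 then (1:ℝ) else 0)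
      ≤ t * {ω | 0 < |φ ω| ∧ |φ ω| ≤ t}.indicator 1 ω + ψ ω ^ 2 / t := by
  have hψ : 0 ≤ ψ ω ^ 2 / t := by positivity
  simp only [Set.indicator_apply, Set.mem_ofPred_eq, Pi.one_apply]
  split_ifs with hE hB hB
  · linarith [hB.2]
  · have hψt : t < |ψ ω| := by
      by_contra! hψt
      exact hB ⟨abs_pos.2 hE.2, hE.1.trans hψt⟩
    rw [mul_one, mul_zero, zero_add, le_div_iff₀ ht, ← sq_abs (ψ ω)]
    nlinarith [hE.1]
  all_goals simp only [mul_zero, mul_one, zero_add]; positivity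

section

variable {Ω : Type*} [MeasurableSpace Ω] {μ : Measure Ω} {φ ψ : Ω → ℝ}

lemma integral_abs_mul_ite_abs_le_eq_zero (hψ2 : Integrable (fun ω => ψ ω ^ 2) μ)
    (h : ∫ ω, ψ ω ^ 2 ∂μ = 0) :
    ∫ ω, |φ ω| * (if |φ ω| ≤ |ψ ω| ∧ φ ω ≠ 0 then (1:ℝ) else 0) ∂μ = 0 := by
  have hψ0 : (fun ω => ψ ω ^ 2) =ᵐ[μ] 0 :=
    (integral_eq_zero_iff_of_nonneg (fun ω => sq_nonneg _) hψ2).1 h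
  refine integral_eq_zero_of_ae ?_
  filter_upwards [hψ0] with ω hω
  rw [if_neg, mul_zero, Pi.zero_apply]
  rintro ⟨hle, hne⟩
  rw [pow_eq_zero_iff two_ne_zero |>.1 hω, abs_zero] at hle
  exact hne (abs_nonpos_iff.1 hle)

lemma measurableSet_abs_mem_Ioc (hφ : Measurable φ) (t : ℝ) :
    MeasurableSet {ω | 0 < |φ ω| ∧ |φ ω| ≤ t} :=
  (measurableSet_lt measurable_const hφ.abs).inter (measurableSet_le hφ.abs measurable_const)

variable [IsFiniteMeasure μ]

lemma integrable_const_mul_indicator_one (hφ : Measurable φ) (t : ℝ) :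
    Integrable (fun ω => t * {ω | 0 < |φ ω| ∧ |φ ω| ≤ t}.indicator 1 ω) μ :=
  ((integrable_const (1:ℝ)).indicator (measurableSet_abs_mem_Ioc hφ t)).const_mul t

lemma integrable_abs_mul_ite_abs_le (hφ : Measurable φ) (hψ : Measurable ψ)
    (hψ2 : Integrable (fun ω => ψ ω ^ 2) μ) :
    Integrable (fun ω => |φ ω| * (if |φ ω| ≤ |ψ ω| ∧ φ ω ≠ 0 then (1:ℝ) else 0)) μ := by
  have hE : MeasurableSet {ω | |φ ω| ≤ |ψ ω| ∧ φ ω ≠ 0} :=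
    (measurableSet_le hφ.abs hψ.abs).inter (hφ (measurableSet_singleton 0)).compl
  refine ((integrable_const_mul_indicator_one hφ 1).add (hψ2.div_const 1)).mono'
    (hφ.abs.mul (measurable_const.ite hE measurable_const)).aestronglyMeasurable
    (ae_of_all _ fun ω => ?_)
  rw [Real.norm_of_nonneg (by positivity)]
  exact abs_mul_ite_le_indicator_add ω one_pos

lemma integral_abs_mul_ite_abs_le_le (hφ : Measurable φ) (hψ2 : Integrable (fun ω => ψ ω ^ 2) μ)
    {t : ℝ} (ht : 0 < t) :
    ∫ ω, |φ ω| * (if |φ ω| ≤ |ψ ω| ∧ φ ω ≠ 0 then (1:ℝ) else 0) ∂μ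
      ≤ t * μ.real {ω | 0 < |φ ω| ∧ |φ ω| ≤ t} + (∫ ω, ψ ω ^ 2 ∂μ) / t := by
  calc _ ≤ ∫ ω, t * {ω | 0 < |φ ω| ∧ |φ ω| ≤ t}.indicator 1 ω + ψ ω ^ 2 / t ∂μ :=
        integral_mono_of_nonneg (ae_of_all _ fun ω => by positivity)
          ((integrable_const_mul_indicator_one hφ t).add (hψ2.div_const t))
          (ae_of_all _ fun ω => abs_mul_ite_le_indicator_add ω ht)
    _ = _ := by
        rw [integral_add (integrable_const_mul_indicator_one hφ t) (hψ2.div_const t),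
          integral_const_mul, integral_div, integral_indicator_one (measurableSet_abs_mem_Ioc hφ t)]

end

lemma two_le_add_two_mul_rpow {γ : ℝ} (hγ : 0 < γ) : 2 ≤ (γ + 2) * (2 / γ) ^ (γ / (γ + 2)) := by
  rcases le_total γ 2 with h | h
  · have : 1 ≤ (2 / γ) ^ (γ / (γ + 2)) := Real.one_le_rpow ((one_le_div hγ).2 h) (by positivity)
    nlinarith
  · have : 2 / γ ≤ (2 / γ) ^ (γ / (γ + 2)) := by
      simpa using Real.rpow_le_rpow_of_exponent_ge (by positivity) ((div_le_one hγ).2 h)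
        ((div_le_one (by positivity)).2 (by linarith))
    calc 2 ≤ (γ + 2) * (2 / γ) := by rw [mul_div_assoc', le_div_iff₀ hγ]; linarith
      _ ≤ _ := by gcongr

lemma exists_threshold_mul_add_div_eq {C S γ : ℝ} (hC : 0 < C) (hS : 0 < S) (hγ : 0 < γ + 2) :
    ∃ t > 0, t * (C * t ^ γ) + S / t = 2 * C ^ (1 / (γ + 2)) * S ^ ((γ + 1) / (γ + 2)) := by
  set t := (S / C) ^ (1 / (γ + 2))
  have ht : 0 < t := by positivity
  have hS_eq : S = C * t ^ (γ + 2) := by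
    rw [← Real.rpow_mul (by positivity), one_div_mul_cancel hγ.ne', Real.rpow_one,
      mul_div_cancel₀ _ hC.ne']
  have hC_eq : C ^ (1 / (γ + 2)) * C ^ ((γ + 1) / (γ + 2)) = C := by
    rw [← Real.rpow_add hC, ← add_div, add_comm, add_assoc, one_add_one_eq_two, div_self hγ.ne',
      Real.rpow_one]
  have h1 : t ^ (γ + 1) = t ^ γ * t := Real.rpow_add_one ht.ne' γ
  have h2 : t ^ (γ + 2) = t ^ γ * t * t := by
    rw [show γ + 2 = γ + 1 + 1 by ring, Real.rpow_add_one ht.ne', h1]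
  refine ⟨t, ht, ?_⟩
  rw [hS_eq, Real.mul_rpow hC.le (by positivity), ← Real.rpow_mul ht.le,
    mul_div_cancel₀ _ hγ.ne', h1, h2, mul_div_assoc, mul_div_cancel_right₀ _ ht.ne']
  linear_combination (-2 * t ^ γ * t) * hC_eq

theorem stmt8_general {Ω : Type*} [MeasurableSpace Ω] (μ : Measure Ω) [IsProbabilityMeasure μ]
    (φ φhat : Ω → ℝ) (hφ : Measurable φ) (hφhat : Measurable φhat)
    (hsq : Integrable (fun ω => (φhat ω - φ ω) ^ 2) μ)
    (C γ : ℝ) (hC : 0 < C) (hγ : 0 < γ)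
    (hmargin : ∀ t > 0, (μ {ω | 0 < |φ ω| ∧ |φ ω| ≤ t}).toReal ≤ C * t ^ γ) :
    (∫ ω, |φ ω| *
        (if (if 0 ≤ φhat ω then (1:ℝ) else -1) ≠ (if 0 ≤ φ ω then 1 else -1) ∧ φ ω ≠ 0
          then (1:ℝ) else 0) ∂μ)
      ≤ (∫ ω, |φ ω| * (if |φ ω| ≤ |φhat ω - φ ω| ∧ φ ω ≠ 0 then (1:ℝ) else 0) ∂μ)
    ∧ (∫ ω, |φ ω| * (if |φ ω| ≤ |φhat ω - φ ω| ∧ φ ω ≠ 0 then (1:ℝ) else 0) ∂μ)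
      ≤ (γ + 2) * (2 / γ) ^ (γ / (γ + 2)) * C ^ (1 / (γ + 2))
          * (∫ ω, (φhat ω - φ ω) ^ 2 ∂μ) ^ ((γ + 1) / (γ + 2)) := by
  refine ⟨integral_mono_of_nonneg (ae_of_all _ fun ω => by positivity)
    (integrable_abs_mul_ite_abs_le hφ (hφhat.sub hφ) hsq)
    (ae_of_all _ fun ω => abs_mul_ite_sign_ne_le (φ ω) (φhat ω)), ?_⟩
  set S := ∫ ω, (φhat ω - φ ω) ^ 2 ∂μ
  rcases (integral_nonneg fun ω => sq_nonneg _ : 0 ≤ S).eq_or_lt with hS | hS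
  · rw [integral_abs_mul_ite_abs_le_eq_zero hsq hS.symm]
    exact mul_nonneg (by positivity) (Real.rpow_nonneg hS.le _)
  obtain ⟨t, ht, hopt⟩ := exists_threshold_mul_add_div_eq hC hS (by linarith : 0 < γ + 2)
  calc _ ≤ t * μ.real {ω | 0 < |φ ω| ∧ |φ ω| ≤ t} + S / t :=
        integral_abs_mul_ite_abs_le_le hφ hsq ht
    _ ≤ t * (C * t ^ γ) + S / t := by gcongr; exact hmargin t ht
    _ = 2 * C ^ (1 / (γ + 2)) * S ^ ((γ + 1) / (γ + 2)) := hopt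
    _ ≤ _ := by gcongr; exact two_le_add_two_mul_rpow hγ

/-- Margin-based misclassification bound, case γ > 0. -/
theorem stmt8 {Ω : Type*} [MeasurableSpace Ω] (μ : Measure Ω) [IsProbabilityMeasure μ]
    (φ φhat : Ω → ℝ) (hφ : Measurable φ) (hφhat : Measurable φhat)
    (hφint : Integrable φ μ) (hsq : Integrable (fun ω => (φhat ω - φ ω) ^ 2) μ)
    (C γ : ℝ) (hC : 0 < C) (hγ : 0 < γ)
    (hmargin : ∀ t > 0, (μ {ω | 0 < |φ ω| ∧ |φ ω| ≤ t}).toReal ≤ C * t ^ γ) :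
    (∫ ω, |φ ω| *
        (if (if 0 ≤ φhat ω then (1:ℝ) else -1) ≠ (if 0 ≤ φ ω then 1 else -1) ∧ φ ω ≠ 0
          then (1:ℝ) else 0) ∂μ)
      ≤ (∫ ω, |φ ω| * (if |φ ω| ≤ |φhat ω - φ ω| ∧ φ ω ≠ 0 then (1:ℝ) else 0) ∂μ)
    ∧ (∫ ω, |φ ω| * (if |φ ω| ≤ |φhat ω - φ ω| ∧ φ ω ≠ 0 then (1:ℝ) else 0) ∂μ)
      ≤ (γ + 2) * (2 / γ) ^ (γ / (γ + 2)) * C ^ (1 / (γ + 2))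
          * (∫ ω, (φhat ω - φ ω) ^ 2 ∂μ) ^ ((γ + 1) / (γ + 2)) :=
  stmt8_general μ φ φhat hφ hφhat hsq C γ hC hγ hmargin
end

section
/- Minimax regret with baseline policy: under the rectangular identified set 𝒯 = {measurable τ : τ̲ ≤ τ ≤ τ̄}, for a fixed measurable baseline policy π_B : X → {0,1} and any policy π, sup_{τ∈𝒯} ( E[π_B(X)·τ(X)] − E[π(X)·τ(X)] ) = E[ (π_B(X)−π(X))·τ̄(X)·𝟙{π_B(X)=1} + (π_B(X)−π(X))·τ̲(X)·𝟙{π_B(X)=0} ], and consequently argmin_{π∈Π} sup_{τ∈𝒯}(I_τ(π_B) − I_τ(π)) = argmax_{π∈Π} E[ (2π(X)−1) · ( τ̄(X)·𝟙{π_B(X)=1} + τ̲(X)·𝟙{π_B(X)=0} ) ]. -/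
open MeasureTheory

private lemma aux_int {X : Type*} [MeasurableSpace X] (μ : Measure X) [IsProbabilityMeasure μ]
    (f : X → ℝ) (hf : Measurable f) (C : ℝ) (hC : ∀ x, |f x| ≤ C) :
    Integrable f μ :=
  ⟨hf.aestronglyMeasurable, HasFiniteIntegral.of_bounded (C := C) (ae_of_all _ fun x => by
    simpa [Real.norm_eq_abs] using hC x)⟩

private lemma key {X : Type*} [MeasurableSpace X] (μ : Measure X) [IsProbabilityMeasure μ]
    (τlo τhi : X → ℝ) (hmlo : Measurable τlo) (hmhi : Measurable τhi)
    (hle : ∀ x, τlo x ≤ τhi x) (C : ℝ) (hbdd : ∀ x, |τlo x| ≤ C ∧ |τhi x| ≤ C)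
    (πB : X → ℝ) (hπB : Measurable πB) (hπB01 : ∀ x, πB x = 0 ∨ πB x = 1)
    (π : X → ℝ) (hπ : Measurable π) (hπ01 : ∀ x, π x = 0 ∨ π x = 1) :
    (⨆ τ : {t : X → ℝ // Measurable t ∧ ∀ x, τlo x ≤ t x ∧ t x ≤ τhi x},
        ((∫ x, πB x * τ.1 x ∂μ) - ∫ x, π x * τ.1 x ∂μ))
      = ∫ x, (πB x - π x) * (τhi x * (if πB x = 1 then 1 else 0)
          + τlo x * (if πB x = 0 then 1 else 0)) ∂μ := by
  set g : X → ℝ := fun x => τhi x * (if πB x = 1 then 1 else 0)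
      + τlo x * (if πB x = 0 then 1 else 0) with hg_def
  have hg_meas : Measurable g := by
    apply (hmhi.mul _).add (hmlo.mul _)
    · exact Measurable.ite (hπB (measurableSet_singleton 1)) measurable_const measurable_const
    · exact Measurable.ite (hπB (measurableSet_singleton 0)) measurable_const measurable_const
  have hg_bdd : ∀ x, |g x| ≤ C := by
    intro x
    rcases hπB01 x with h | h <;> simp [hg_def, h] <;>
      [exact (hbdd x).1; exact (hbdd x).2]
  have hg_in : ∀ x, τlo x ≤ g x ∧ g x ≤ τhi x := by
    intro x
    rcases hπB01 x with h | h <;> simp [hg_def, h] <;> exact hle x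
  -- integrability helpers
  have hτbdd : ∀ (τ : X → ℝ), (∀ x, τlo x ≤ τ x ∧ τ x ≤ τhi x) → ∀ x, |τ x| ≤ C := by
    intro τ hτ x
    have h1 := (hbdd x).1; have h2 := (hbdd x).2
    have := (hτ x).1; have := (hτ x).2
    rw [abs_le] at *
    constructor <;> linarith [h1.1, h2.2, (hτ x).1, (hτ x).2]
  have hmul_int : ∀ (q τ : X → ℝ), Measurable q → (∀ x, q x = 0 ∨ q x = 1) →
      Measurable τ → (∀ x, |τ x| ≤ C) → Integrable (fun x => q x * τ x) μ := by
    intro q τ hq hq01 hτm hτb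
    apply aux_int μ _ (hq.mul hτm) C
    intro x
    rcases hq01 x with h | h <;> simp [h]
    · exact le_trans (abs_nonneg _) (hτb x)
    · exact hτb x
  have hsub_int : ∀ (τ : X → ℝ), Measurable τ → (∀ x, |τ x| ≤ C) →
      Integrable (fun x => (πB x - π x) * τ x) μ := by
    intro τ hτm hτb
    have : (fun x => (πB x - π x) * τ x)
        = fun x => πB x * τ x - π x * τ x := by funext x; ring
    rw [this]
    exact (hmul_int πB τ hπB hπB01 hτm hτb).sub (hmul_int π τ hπ hπ01 hτm hτb)
  -- pointwise inequality
  have hpt : ∀ (τ : X → ℝ), (∀ x, τlo x ≤ τ x ∧ τ x ≤ τhi x) →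
      ∀ x, (πB x - π x) * τ x ≤ (πB x - π x) * g x := by
    intro τ hτ x
    have h1 := (hτ x).1; have h2 := (hτ x).2
    rcases hπB01 x with h | h <;> rcases hπ01 x with h' | h' <;>
      simp [hg_def, h, h'] <;> nlinarith
  haveI : Nonempty {t : X → ℝ // Measurable t ∧ ∀ x, τlo x ≤ t x ∧ t x ≤ τhi x} :=
    ⟨⟨τlo, hmlo, fun x => ⟨le_refl _, hle x⟩⟩⟩
  -- the upper bound for every τ in the set
  have hub : ∀ τ : {t : X → ℝ // Measurable t ∧ ∀ x, τlo x ≤ t x ∧ t x ≤ τhi x},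
      ((∫ x, πB x * τ.1 x ∂μ) - ∫ x, π x * τ.1 x ∂μ)
        ≤ ∫ x, (πB x - π x) * g x ∂μ := by
    rintro ⟨τ, hτm, hτ⟩
    have hτb := hτbdd τ hτ
    rw [← integral_sub (hmul_int πB τ hπB hπB01 hτm hτb) (hmul_int π τ hπ hπ01 hτm hτb)]
    have : (fun x => πB x * τ x - π x * τ x) = fun x => (πB x - π x) * τ x := by
      funext x; ring
    rw [this]
    exact integral_mono (hsub_int τ hτm hτb) (hsub_int g hg_meas hg_bdd) (hpt τ hτ)
  apply le_antisymm (ciSup_le hub)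
  have hbdda : BddAbove (Set.range fun τ : {t : X → ℝ // Measurable t ∧
      ∀ x, τlo x ≤ t x ∧ t x ≤ τhi x} =>
      ((∫ x, πB x * τ.1 x ∂μ) - ∫ x, π x * τ.1 x ∂μ)) :=
    ⟨_, by rintro y ⟨τ, rfl⟩; exact hub τ⟩
  apply le_ciSup_of_le hbdda ⟨g, hg_meas, hg_in⟩
  rw [← integral_sub (hmul_int πB g hπB hπB01 hg_meas hg_bdd)
      (hmul_int π g hπ hπ01 hg_meas hg_bdd)]
  apply le_of_eq
  congr 1
  funext x
  ring

/-- Minimax regret with respect to a baseline policy: closed form for the worst-case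
regret and the resulting characterization of the optimal policy as maximizer of
E[(2π−1)·(τ̄·𝟙{π_B=1} + τ̲·𝟙{π_B=0})]. -/
theorem stmt14 {X : Type*} [MeasurableSpace X] (μ : Measure X) [IsProbabilityMeasure μ]
    (τlo τhi : X → ℝ) (hmlo : Measurable τlo) (hmhi : Measurable τhi)
    (hle : ∀ x, τlo x ≤ τhi x) (C : ℝ) (hbdd : ∀ x, |τlo x| ≤ C ∧ |τhi x| ≤ C)
    (πB : X → ℝ) (hπB : Measurable πB) (hπB01 : ∀ x, πB x = 0 ∨ πB x = 1)
    (Pol : Set (X → ℝ)) (hPol : ∀ p ∈ Pol, Measurable p ∧ ∀ x, p x = 0 ∨ p x = 1) :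
    (∀ π : X → ℝ, Measurable π → (∀ x, π x = 0 ∨ π x = 1) →
      (⨆ τ : {t : X → ℝ // Measurable t ∧ ∀ x, τlo x ≤ t x ∧ t x ≤ τhi x},
          ((∫ x, πB x * τ.1 x ∂μ) - ∫ x, π x * τ.1 x ∂μ))
        = ∫ x, (πB x - π x) * (τhi x * (if πB x = 1 then 1 else 0)
            + τlo x * (if πB x = 0 then 1 else 0)) ∂μ)
    ∧ ∀ pstar ∈ Pol,
        ((∀ p ∈ Pol,
            (⨆ τ : {t : X → ℝ // Measurable t ∧ ∀ x, τlo x ≤ t x ∧ t x ≤ τhi x},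
                ((∫ x, πB x * τ.1 x ∂μ) - ∫ x, pstar x * τ.1 x ∂μ))
              ≤ ⨆ τ : {t : X → ℝ // Measurable t ∧ ∀ x, τlo x ≤ t x ∧ t x ≤ τhi x},
                ((∫ x, πB x * τ.1 x ∂μ) - ∫ x, p x * τ.1 x ∂μ))
          ↔ (∀ p ∈ Pol,
              (∫ x, (2 * p x - 1) * (τhi x * (if πB x = 1 then 1 else 0)
                  + τlo x * (if πB x = 0 then 1 else 0)) ∂μ)
                ≤ ∫ x, (2 * pstar x - 1) * (τhi x * (if πB x = 1 then 1 else 0)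
                  + τlo x * (if πB x = 0 then 1 else 0)) ∂μ)) := by
  set g : X → ℝ := fun x => τhi x * (if πB x = 1 then 1 else 0)
      + τlo x * (if πB x = 0 then 1 else 0) with hg_def
  have hg_meas : Measurable g := by
    apply (hmhi.mul _).add (hmlo.mul _)
    · exact Measurable.ite (hπB (measurableSet_singleton 1)) measurable_const measurable_const
    · exact Measurable.ite (hπB (measurableSet_singleton 0)) measurable_const measurable_const
  have hg_bdd : ∀ x, |g x| ≤ C := by
    intro x
    rcases hπB01 x with h | h <;> simp [hg_def, h] <;>
      [exact (hbdd x).1; exact (hbdd x).2]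
  have hg_int : Integrable g μ := aux_int μ g hg_meas C hg_bdd
  have hmul_int : ∀ (q : X → ℝ), Measurable q → (∀ x, q x = 0 ∨ q x = 1) →
      Integrable (fun x => q x * g x) μ := by
    intro q hq hq01
    apply aux_int μ _ (hq.mul hg_meas) C
    intro x
    rcases hq01 x with h | h <;> simp [h]
    · exact le_trans (abs_nonneg _) (hg_bdd x)
    · exact hg_bdd x
  have hkey := key μ τlo τhi hmlo hmhi hle C hbdd πB hπB hπB01
  refine ⟨fun π hπ hπ01 => hkey π hπ hπ01, ?_⟩
  -- closed form in terms of ∫ p·g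
  have hsup : ∀ (p : X → ℝ), Measurable p → (∀ x, p x = 0 ∨ p x = 1) →
      (⨆ τ : {t : X → ℝ // Measurable t ∧ ∀ x, τlo x ≤ t x ∧ t x ≤ τhi x},
          ((∫ x, πB x * τ.1 x ∂μ) - ∫ x, p x * τ.1 x ∂μ))
        = (∫ x, πB x * g x ∂μ) - ∫ x, p x * g x ∂μ := by
    intro p hp hp01
    rw [hkey p hp hp01]
    rw [show (fun x => (πB x - p x) * g x) = fun x => πB x * g x - p x * g x by
      funext x; ring]
    exact integral_sub (hmul_int πB hπB hπB01) (hmul_int p hp hp01)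
  have hJ : ∀ (p : X → ℝ), Measurable p → (∀ x, p x = 0 ∨ p x = 1) →
      (∫ x, (2 * p x - 1) * g x ∂μ) = 2 * (∫ x, p x * g x ∂μ) - ∫ x, g x ∂μ := by
    intro p hp hp01
    rw [show (fun x => (2 * p x - 1) * g x) = fun x => 2 * (p x * g x) - g x by
      funext x; ring]
    rw [integral_sub ((hmul_int p hp hp01).const_mul 2) hg_int, integral_const_mul]
  intro pstar hpstar
  obtain ⟨hps_m, hps_01⟩ := hPol pstar hpstar
  constructor
  · intro h p hp
    obtain ⟨hpm, hp01⟩ := hPol p hp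
    have := h p hp
    rw [hsup pstar hps_m hps_01, hsup p hpm hp01] at this
    rw [hJ pstar hps_m hps_01, hJ p hpm hp01]
    linarith
  · intro h p hp
    obtain ⟨hpm, hp01⟩ := hPol p hp
    have := h p hp
    rw [hJ pstar hps_m hps_01, hJ p hpm hp01] at this
    rw [hsup pstar hps_m hps_01, hsup p hpm hp01]
    linarith
end
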